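/- There do not exist positive integers a, b, c, d such that (a, b, c) and (a, d, b) are both Pythagorean triples, i.e., c^2 = a^2 + b^2 and b^2 = a^2 + d^2. -/

import Mathlib

/-! If `c² = a² + b²` and `b² = a² + d²` then `b⁴ - a⁴ = (b² - a²)(b² + a²) = d²c²`, so it is enough
that `x⁴ - y⁴ = z²` has no solution in positive integers (Fermat's right triangle theorem). This
goes by descent on `x`. After dividing by `gcd x y`, `(y², z, x²)` is a primitive Pythagorean
triple. If `y` is odd, then `y² = m² - n²` and `x² = m² + n²`, which gives the smaller solution
`m⁴ - n⁴ = (xy)²`. If `y` is even, then `y² = 2mn` forces `{m, n} = {2s², t²}`, so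
`x² = t⁴ + 4s⁴`; the primitive triple `(t², 2s², x)` gives `t² = p² - q²` with `pq = s²`, hence
`p = u²`, `q = v²` and `u⁴ - v⁴ = t²` with `u < x`. -/

namespace Nat

theorem Coprime.exists_eq_sq_of_mul_eq_sq {u v w : ℕ} (h : u.Coprime v) (huv : u * v = w ^ 2) :
    ∃ s, u = s ^ 2 :=
  exists_eq_pow_of_mul_eq_pow (Nat.isUnit_iff.mpr h) huv

theorem pythagorean_coprime_classification {x y z : ℕ} (h : x ^ 2 + y ^ 2 = z ^ 2)
    (hxy : x.Coprime y) (hx : Odd x) :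
    ∃ m n, m.Coprime n ∧ x + n ^ 2 = m ^ 2 ∧ y = 2 * m * n ∧ z = m ^ 2 + n ^ 2 := by
  have ht : PythagoreanTriple (x : ℤ) y z := by
    unfold PythagoreanTriple; exact_mod_cast by linear_combination h
  have hz : 0 < z := Nat.pos_of_ne_zero (by rintro rfl; simp at h; simp [h.1] at hx)
  have hxodd : (x : ℤ) % 2 = 1 := by exact_mod_cast Nat.odd_iff.mp hx
  obtain ⟨m, n, hxmn, hymn, hzmn, hcop, -⟩ :=
    ht.coprime_classification' (by rwa [Int.gcd_natCast_natCast]) hxodd (by exact_mod_cast hz)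
  refine ⟨m.natAbs, n.natAbs, hcop, ?_, ?_, ?_⟩
  · zify; rw [sq_abs, sq_abs]; linarith
  · simpa [Int.natAbs_mul] using congrArg Int.natAbs hymn
  · zify; rwa [sq_abs, sq_abs]

end Nat

def FermatRightTriangle (x : ℕ) : Prop :=
  ∃ y z, 0 < y ∧ 0 < z ∧ x ^ 4 = y ^ 4 + z ^ 2

namespace FermatRightTriangle

theorem exists_lt_of_sq_eq_fourth_pow_add_four_mul_fourth_pow {x t s : ℕ} (ht : Odd t)
    (hs : 0 < s) (hts : t.Coprime s) (h : x ^ 2 = t ^ 4 + 4 * s ^ 4) :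
    ∃ u < x, FermatRightTriangle u := by
  have hcop : (t ^ 2).Coprime (2 * s ^ 2) :=
    Nat.Coprime.mul_right (Nat.coprime_two_right.mpr ht.pow) (hts.pow 2 2)
  obtain ⟨p, q, hpq, htq, hspq, hxpq⟩ :=
    Nat.pythagorean_coprime_classification (z := x) (by linear_combination h.symm) hcop ht.pow
  have hs2 : p * q = s ^ 2 := by linarith
  obtain ⟨u, rfl⟩ := hpq.exists_eq_sq_of_mul_eq_sq hs2
  obtain ⟨v, rfl⟩ := hpq.symm.exists_eq_sq_of_mul_eq_sq (by rw [mul_comm, hs2])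
  have hv : 0 < v := Nat.pos_of_ne_zero (by rintro rfl; simp at hs2; exact (pow_pos hs 2).ne hs2)
  refine ⟨u, ?_, v, t, hv, ht.pos, by linear_combination htq.symm⟩
  calc u ≤ (u ^ 2) ^ 2 := by rw [← pow_mul]; exact Nat.le_self_pow (by norm_num) u
    _ < x := by rw [hxpq]; exact Nat.lt_add_of_pos_right (by positivity)

theorem exists_lt_of_sq_eq_two_mul_mul {x y m n : ℕ} (hmn : m.Coprime n) (hm : Even m) (hy : 0 < y)
    (hy2 : y ^ 2 = 2 * m * n) (hx : x ^ 2 = m ^ 2 + n ^ 2) :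
    ∃ u < x, FermatRightTriangle u := by
  obtain ⟨k, rfl⟩ := hm.two_dvd
  have hy2' : 2 ∣ y := (Nat.prime_two.dvd_of_dvd_pow (n := 2)) ⟨2 * k * n, by rw [hy2]; ring⟩
  obtain ⟨y, rfl⟩ := hy2'
  have hkn : k.Coprime n := hmn.coprime_dvd_left (dvd_mul_left k 2)
  have hy3 : k * n = y ^ 2 := by linarith
  obtain ⟨s, rfl⟩ := hkn.exists_eq_sq_of_mul_eq_sq hy3
  obtain ⟨t, rfl⟩ := hkn.symm.exists_eq_sq_of_mul_eq_sq (by rw [mul_comm, hy3])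
  have ht : Odd t := (Nat.odd_pow_iff two_ne_zero).mp
    (Nat.coprime_two_left.mp (hmn.coprime_dvd_left (dvd_mul_right 2 _)))
  have hs : 0 < s := Nat.pos_of_ne_zero
    (by rintro rfl; simp at hy3; exact (pow_pos (by omega) 2).ne hy3)
  exact exists_lt_of_sq_eq_fourth_pow_add_four_mul_fourth_pow ht hs
    (by simpa [Nat.coprime_pow_left_iff, Nat.coprime_pow_right_iff] using hkn.symm)
    (by linear_combination hx)

theorem exists_lt_of_coprime {x y z : ℕ} (hy : 0 < y) (hz : 0 < z) (hxy : x.Coprime y)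
    (h : x ^ 4 = y ^ 4 + z ^ 2) : ∃ u < x, FermatRightTriangle u := by
  have hyz : y.Coprime z := by
    have : ((y ^ 2) ^ 2).Coprime (z ^ 2 + (y ^ 2) ^ 2) := by
      rw [← pow_mul, add_comm, ← h]; exact (hxy.pow 4 4).symm
    simpa [Nat.coprime_pow_left_iff, Nat.coprime_pow_right_iff] using
      Nat.coprime_add_self_right.mp this
  rcases Nat.even_or_odd y with hy2 | hy2
  · have hz2 : Odd z := Nat.coprime_two_left.mp (hyz.coprime_dvd_left hy2.two_dvd)
    obtain ⟨m, n, hmn, -, hymn, hxmn⟩ := Nat.pythagorean_coprime_classification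
      (x := z) (y := y ^ 2) (z := x ^ 2) (by linear_combination h.symm) (hyz.pow_left 2).symm hz2
    obtain ⟨y', rfl⟩ := hy2.two_dvd
    have hmn2 : Even (m * n) := ⟨y' ^ 2, by linarith⟩
    rcases Nat.even_mul.mp hmn2 with hm | hn
    · exact exists_lt_of_sq_eq_two_mul_mul hmn hm hy hymn hxmn
    · exact exists_lt_of_sq_eq_two_mul_mul hmn.symm hn hy (by rw [hymn]; ring) (by rw [hxmn]; ring)
  · obtain ⟨m, n, -, hymn, hzmn, hxmn⟩ := Nat.pythagorean_coprime_classification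
      (x := y ^ 2) (z := x ^ 2) (by linear_combination h.symm) (hyz.pow_left 2) hy2.pow
    have hn : 0 < n := Nat.pos_of_ne_zero (by rintro rfl; simp at hzmn; omega)
    have hx : 0 < x := Nat.pos_of_ne_zero (by rintro rfl; have := pow_pos hy 4; omega)
    refine ⟨m, ?_, n, x * y, hn, by positivity, ?_⟩
    · have : m ^ 2 < x ^ 2 := by rw [hxmn]; exact Nat.lt_add_of_pos_right (by positivity)
      exact lt_of_pow_lt_pow_left₀ 2 (Nat.zero_le x) this
    · linear_combination (m ^ 2 + n ^ 2) * hymn.symm + y ^ 2 * hxmn.symm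

theorem exists_lt {x : ℕ} (h : FermatRightTriangle x) : ∃ u < x, FermatRightTriangle u := by
  obtain ⟨y, z, hy, hz, h⟩ := h
  obtain ⟨g, x, y, hg, hxy, rfl, rfl⟩ := Nat.exists_coprime' (Nat.gcd_pos_of_pos_right x hy)
  have hgz : g ^ 2 ∣ z := by
    rw [← Nat.pow_dvd_pow_iff two_ne_zero, ← pow_mul,
      ← Nat.dvd_add_right (Dvd.intro_left _ (mul_pow y g 4).symm), ← h]
    exact Dvd.intro_left _ (mul_pow x g 4).symm
  obtain ⟨z, rfl⟩ := hgz
  have h' : x ^ 4 = y ^ 4 + z ^ 2 :=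
    Nat.eq_of_mul_eq_mul_left (pow_pos hg 4) (by linear_combination h)
  obtain ⟨u, hu, hu'⟩ :=
    exists_lt_of_coprime (Nat.pos_of_mul_pos_right hy) (Nat.pos_of_mul_pos_left hz) hxy h'
  exact ⟨u, hu.trans_le (Nat.le_mul_of_pos_right x hg), hu'⟩

end FermatRightTriangle

theorem not_fermatRightTriangle (x : ℕ) : ¬ FermatRightTriangle x := by
  induction x using Nat.strong_induction_on with
  | _ x ih =>
    intro h
    obtain ⟨u, hu, hu'⟩ := h.exists_lt
    exact ih u hu hu'

theorem stmt_2 : ¬ ∃ a b c d : ℕ, 0 < a ∧ 0 < b ∧ 0 < c ∧ 0 < d ∧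
    c^2 = a^2 + b^2 ∧ b^2 = a^2 + d^2 := by
  rintro ⟨a, b, c, d, ha, -, hc, hd, hcab, hbad⟩
  exact not_fermatRightTriangle b
    ⟨a, c * d, ha, by positivity, by linear_combination (a ^ 2 + b ^ 2) * hbad + d ^ 2 * hcab.symm⟩
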